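/- For every natural number n and all natural numbers r, s with 1 ≤ s ≤ r, ∑_{k=0}^{n} (−1)^k · (C(n,k)/C(k+r, s)) · H_k = H_n · ( (s/(r−s+1)) · 1/C(n+r, r−s+1) − 1/C(r, s) ) + s · ∑_{k=0}^{n−1} H_{n−1−k} / ((k+s) · C(r+k+1, r−s+1)), as an identity of real numbers. -/

import Mathlib

/-!
Write `B f n = ∑ₖ (-1)^k C(n,k) f k` for the binomial transform. Pascal's rule gives
`B f (n+1) = B f n - B (f ∘ succ) n`, and together with `H (k+1) = H k + 1/(k+1)` and
`C(n+1,k+1) = (n+1)/(k+1) · C(n,k)` an induction on `n`, over all `f` at once, yields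
`B (H · f) n = H n (B f n - f 0) + ∑_{k<n} H (n-1-k) · B (f ∘ succ) k`.
For `f k = 1 / C(k+r, s)` the transform is the Beta value `s / ((r-s+1) C(n+r, r-s+1))`, by the
same Pascal recursion in `r`; its shift `f ∘ succ` is the case `r + 1`, and substituting both gives
the identity.
-/

open Finset

noncomputable def H : ℕ → ℝ := fun m => ∑ j ∈ range m, (1 : ℝ) / (j + 1)

section BinomialTransform

variable {R : Type*} [CommRing R]

def binomialTransform (f : ℕ → R) (n : ℕ) : R :=
  ∑ k ∈ range (n + 1), (-1) ^ k * n.choose k * f k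

@[simp]
theorem binomialTransform_zero (f : ℕ → R) : binomialTransform f 0 = f 0 := by
  simp [binomialTransform]

theorem binomialTransform_add (f g : ℕ → R) (n : ℕ) :
    binomialTransform (f + g) n = binomialTransform f n + binomialTransform g n := by
  simp only [binomialTransform, Pi.add_apply, mul_add, sum_add_distrib]

theorem binomialTransform_succ (f : ℕ → R) (n : ℕ) :
    binomialTransform f (n + 1) =
      binomialTransform f n - binomialTransform (fun k => f (k + 1)) n := by
  have hext : binomialTransform f n = ∑ k ∈ range (n + 2), (-1) ^ k * n.choose k * f k := by
    simp [binomialTransform, sum_range_succ _ (n + 1)]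
  rw [hext, binomialTransform, binomialTransform, sum_range_succ' _ (n + 1),
    sum_range_succ' _ (n + 1)]
  simp only [Nat.choose_succ_succ', Nat.cast_add, pow_succ, mul_neg_one, neg_mul, mul_add, add_mul,
    sum_add_distrib, sum_neg_distrib, Nat.choose_zero_right, Nat.cast_one, pow_zero]
  ring

end BinomialTransform

theorem inv_choose_comp_succ {K : Type*} [DivisionRing K] (s t : ℕ) :
    (fun k => ((k + 1 + (s + t)).choose s : K)⁻¹) =
      fun k => ((k + (s + (t + 1))).choose s : K)⁻¹ := by
  funext k
  rw [show k + 1 + (s + t) = k + (s + (t + 1)) by omega]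

section Field

variable {K : Type*} [Field K] [CharZero K]

theorem binomialTransform_shift_div (f : ℕ → K) (n : ℕ) :
    binomialTransform (fun k => f (k + 1) / (k + 1)) n =
      (f 0 - binomialTransform f (n + 1)) / (n + 1) := by
  have hterm : ∀ k ∈ range (n + 1), (-1) ^ (k + 1) * ((n + 1).choose (k + 1) : K) * f (k + 1) =
      -(n + 1) * ((-1) ^ k * n.choose k * (f (k + 1) / (k + 1))) := by
    intro k _
    have hchoose : ((n + 1) * n.choose k : K) = (n + 1).choose (k + 1) * (k + 1) := by
      exact_mod_cast Nat.add_one_mul_choose_eq n k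
    field_simp
    linear_combination (-1) ^ k * f (k + 1) * hchoose
  simp only [binomialTransform]
  rw [sum_range_succ' _ (n + 1), sum_congr rfl hterm, ← mul_sum]
  field_simp
  simp

/-- Pascal's rule `B(a, b) = B(a + 1, b) + B(a, b + 1)` for the Beta function
`B(j, N - j + 1) = 1 / (j * C(N, j))`. -/
theorem inv_mul_choose_succ (N j : ℕ) (hj : j < N) :
    ((j + 1) * (N + 1).choose (j + 1) : K)⁻¹ =
      ((j + 1) * N.choose (j + 1) : K)⁻¹ - ((j + 2) * (N + 1).choose (j + 2) : K)⁻¹ := by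
  have hNj : (N - j : K) ≠ 0 := sub_ne_zero.mpr (by exact_mod_cast hj.ne')
  have hj2 : (j + 2 : K) ≠ 0 := by exact_mod_cast Nat.succ_ne_zero (j + 1)
  have hZ : ((N + 1).choose (j + 2) : K) = (N + 1) * N.choose (j + 1) / (j + 2) := by
    rw [eq_div_iff hj2]
    exact_mod_cast (Nat.add_one_mul_choose_eq N (j + 1)).symm
  have hY : ((N + 1).choose (j + 1) : K) = (N + 1) * N.choose (j + 1) / (N - j) := by
    have := Nat.choose_mul_succ_eq N (j + 1)
    rw [Nat.add_sub_add_right] at this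
    rw [eq_div_iff hNj, ← Nat.cast_sub hj.le, mul_comm (N + 1 : K)]
    exact_mod_cast this.symm
  rw [hZ, hY]
  field_simp
  ring

theorem binomialTransform_inv_choose {s : ℕ} (hs : 1 ≤ s) (t n : ℕ) :
    binomialTransform (fun k => ((k + (s + t)).choose s : K)⁻¹) n =
      s * ((t + 1) * (n + s + t).choose (t + 1) : K)⁻¹ := by
  induction n generalizing t with
  | zero =>
    have hX : ((s + t).choose (t + 1) : K) ≠ 0 := by exact_mod_cast (Nat.choose_pos (by omega)).ne'
    have hY : ((s + t).choose s : K) ≠ 0 := by exact_mod_cast (Nat.choose_pos (by omega)).ne'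
    have hchoose : ((s + t).choose (t + 1) * (t + 1) : K) = (s + t).choose s * s := by
      have := Nat.choose_succ_right_eq (s + t) t
      rw [Nat.add_sub_cancel, ← Nat.choose_symm_add] at this
      exact_mod_cast this
    rw [binomialTransform_zero, zero_add, zero_add]
    field_simp
    linear_combination hchoose
  | succ n ih =>
    rw [binomialTransform_succ, inv_choose_comp_succ, ih, ih,
      show n + s + (t + 1) = n + s + t + 1 by omega, show n + 1 + s + t = n + s + t + 1 by omega,
      inv_mul_choose_succ (n + s + t) t (by omega)]
    push_cast
    ring

theorem binomialTransform_inv_choose_shift {s : ℕ} (hs : 1 ≤ s) (t n : ℕ) :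
    binomialTransform (fun k => ((k + 1 + (s + t)).choose s : K)⁻¹) n =
      s / ((n + s) * (s + t + n + 1).choose (t + 1)) := by
  have hchoose : ((s + t + n + 1).choose (t + 1 + 1) * (t + 1 + 1) : K) =
      (s + t + n + 1).choose (t + 1) * (n + s) := by
    have := Nat.choose_succ_right_eq (s + t + n + 1) (t + 1)
    rw [show s + t + n + 1 - (t + 1) = n + s by omega] at this
    exact_mod_cast this
  rw [inv_choose_comp_succ, binomialTransform_inv_choose hs,
    show n + s + (t + 1) = s + t + n + 1 by omega, div_eq_mul_inv, mul_comm (n + s : K), ← hchoose,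
    mul_comm ((s + t + n + 1).choose _ : K)]
  push_cast
  ring

end Field

theorem H_succ (n : ℕ) : H (n + 1) = H n + 1 / (n + 1) := sum_range_succ _ _

theorem binomialTransform_H_mul (f : ℕ → ℝ) (n : ℕ) :
    binomialTransform (fun k => H k * f k) n =
      H n * (binomialTransform f n - f 0) +
        ∑ k ∈ range n, H (n - 1 - k) * binomialTransform (fun j => f (j + 1)) k := by
  induction n generalizing f with
  | zero => simp [H]
  | succ n ih =>
    have hshift : (fun k => H (k + 1) * f (k + 1)) =
        (fun k => H k * f (k + 1)) + fun k => f (k + 1) / (k + 1) := by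
      funext k
      simp only [H_succ, Pi.add_apply]
      ring
    have hsum : ∑ k ∈ range (n + 1), H (n + 1 - 1 - k) * binomialTransform (fun j => f (j + 1)) k =
        H n * f 1 + ∑ k ∈ range n, H (n - 1 - k) * (binomialTransform (fun j => f (j + 1)) k -
          binomialTransform (fun j => f (j + 1 + 1)) k) := by
      rw [sum_range_succ', add_comm, Nat.add_sub_cancel, Nat.sub_zero, binomialTransform_zero]
      congr 1
      refine sum_congr rfl fun k _ => ?_
      rw [binomialTransform_succ, show n - (k + 1) = n - 1 - k by omega]
    rw [binomialTransform_succ, hshift, binomialTransform_add, binomialTransform_shift_div, ih, ih,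
      hsum, binomialTransform_succ f n, H_succ]
    simp only [mul_sub, sum_sub_distrib]
    field_simp
    ring

theorem stmt_9 (n : ℕ) (r s : ℕ) (hs : 1 ≤ s) (hsr : s ≤ r) :
    ∑ k ∈ range (n + 1),
        (-1 : ℝ) ^ k * ((Nat.choose n k : ℝ) / (Nat.choose (k + r) s : ℝ)) * H k =
      H n * (((s : ℝ) / (((r - s : ℕ) : ℝ) + 1)) * (1 / (Nat.choose (n + r) (r - s + 1) : ℝ)) -
          1 / (Nat.choose r s : ℝ)) +
        (s : ℝ) * ∑ k ∈ range n,
          H (n - 1 - k) / (((k : ℝ) + s) * (Nat.choose (r + k + 1) (r - s + 1) : ℝ)) := by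
  obtain ⟨t, rfl⟩ := Nat.exists_eq_add_of_le hsr
  have hlhs : ∑ k ∈ range (n + 1),
      (-1 : ℝ) ^ k * ((Nat.choose n k : ℝ) / (Nat.choose (k + (s + t)) s : ℝ)) * H k =
      binomialTransform (fun k => H k * ((k + (s + t)).choose s : ℝ)⁻¹) n :=
    sum_congr rfl fun k _ => by ring
  rw [hlhs, binomialTransform_H_mul, binomialTransform_inv_choose hs, Nat.add_sub_cancel_left,
    zero_add, ← add_assoc n s t, mul_sum]
  simp only [binomialTransform_inv_choose_shift hs]
  congr 1
  · rw [mul_inv]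
    ring
  · exact sum_congr rfl fun k _ => by ring
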